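/- Let H be a Hopf algebra over a field k with multiplication m, comultiplication Δ, counit ε and antipode S, and let R ⊆ ker(ε) be a right ideal of H contained in the augmentation ideal. Define N ⊆ H ⊗ H as the linear span of the elements a S(r₍₁₎) ⊗ r₍₂₎ for a ∈ H and r ∈ R (i.e. N = Ψ(H ⊗ R) for the inverse Galois map Ψ(a⊗b) = a S(b₍₁₎) ⊗ b₍₂₎). Then N is an H-sub-bimodule of H ⊗ H (for the actions c·(a⊗b) = ca⊗b and (a⊗b)·c = a⊗(bc)) and N ⊆ ker(m). Hence every right ideal R ⊆ ker(ε) determines a first-order differential calculus ker(m)/N over H. -/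

import Mathlib

/- The Woronowicz correspondence: a right ideal R ⊆ ker(ε) determines a
sub-bimodule N = Ψ(H ⊗ R) ⊆ ker(m), hence a first-order differential calculus
ker(m)/N over H. -/

open TensorProduct

/-- The inverse Galois map `Ψ = (m ⊗ id) ∘ (id ⊗ ((S ⊗ id) ∘ Δ))`,
`Ψ(a ⊗ b) = a S(b₍₁₎) ⊗ b₍₂₎`. -/
noncomputable def galoisMapInv (k H : Type*) [Field k] [Ring H]
    [HopfAlgebra k H] : H ⊗[k] H →ₗ[k] H ⊗[k] H :=
  (TensorProduct.map (LinearMap.mul' k H) LinearMap.id) ∘ₗ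
    (TensorProduct.assoc k H H H).symm.toLinearMap ∘ₗ
      (TensorProduct.map LinearMap.id
        ((TensorProduct.map (HopfAlgebra.antipode (R := k) (A := H))
          LinearMap.id) ∘ₗ Coalgebra.comul))

/-- The sub-bimodule `N = Ψ(H ⊗ R)` spanned by the elements
`a S(r₍₁₎) ⊗ r₍₂₎`, `a ∈ H`, `r ∈ R`. -/
noncomputable def idealSubBimodule (k H : Type*) [Field k] [Ring H]
    [HopfAlgebra k H] (R : Submodule k H) : Submodule k (H ⊗[k] H) :=
  Submodule.map (galoisMapInv k H)
    (LinearMap.range (TensorProduct.map (LinearMap.id : H →ₗ[k] H) R.subtype))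

namespace WorAux

open Coalgebra

set_option synthInstance.maxHeartbeats 1000000
set_option maxHeartbeats 1000000

variable (k H : Type*) [Field k] [Ring H] [HopfAlgebra k H]

/-- The Galois map `Φ(a ⊗ b) = a b₍₁₎ ⊗ b₍₂₎`. -/
noncomputable def galoisMap : H ⊗[k] H →ₗ[k] H ⊗[k] H :=
  (TensorProduct.map (LinearMap.mul' k H) LinearMap.id) ∘ₗ
    (TensorProduct.assoc k H H H).symm.toLinearMap ∘ₗ
      (TensorProduct.map LinearMap.id Coalgebra.comul)

lemma galoisMapInv_tmul {ι : Type*} (a b : H) (rb : Coalgebra.Repr k b ι) :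
    galoisMapInv k H (a ⊗ₜ[k] b) =
      ∑ i ∈ rb.index,
        (a * HopfAlgebra.antipode (R := k) (rb.left i)) ⊗ₜ[k] rb.right i := by
  simp [galoisMapInv, ← rb.eq, map_sum, tmul_sum, TensorProduct.assoc_symm_tmul,
    LinearMap.mul'_apply]

lemma galoisMap_tmul {ι : Type*} (a b : H) (rb : Coalgebra.Repr k b ι) :
    galoisMap k H (a ⊗ₜ[k] b) =
      ∑ i ∈ rb.index, (a * rb.left i) ⊗ₜ[k] rb.right i := by
  simp [galoisMap, ← rb.eq, map_sum, tmul_sum, TensorProduct.assoc_symm_tmul,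
    LinearMap.mul'_apply]

/-- Coassociativity transfer: the two ways of forming `a g(b₍₁₎) f(b₍₂₎) ⊗ b₍₃₎`. -/
lemma coassoc_transfer {ι κ Λ : Type*} (f g : H →ₗ[k] H) (a b : H) (rb : Coalgebra.Repr k b ι)
    (rl : ∀ i, Coalgebra.Repr k (rb.left i) κ) (rr : ∀ i, Coalgebra.Repr k (rb.right i) Λ) :
    ∑ i ∈ rb.index, ∑ j ∈ (rl i).index,
      (a * (g ((rl i).left j) * f ((rl i).right j))) ⊗ₜ[k] rb.right i =
    ∑ i ∈ rb.index, ∑ j ∈ (rr i).index,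
      (a * (g (rb.left i) * f ((rr i).left j))) ⊗ₜ[k] (rr i).right j := by
  have h := Coalgebra.sum_tmul_tmul_eq (R := k) rb rl rr
  have h2 := congrArg (TensorProduct.map
      ((LinearMap.mulLeft k a) ∘ₗ (LinearMap.mul' k H) ∘ₗ (TensorProduct.map g f))
      (LinearMap.id : H →ₗ[k] H) ∘ₗ (TensorProduct.assoc k H H H).symm.toLinearMap) h
  simpa [map_sum, TensorProduct.assoc_symm_tmul, LinearMap.mul'_apply] using h2

lemma sum_counit_smul {ι : Type*} (b : H) (rb : Coalgebra.Repr k b ι) :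
    ∑ i ∈ rb.index, (Coalgebra.counit (R := k) (rb.left i)) • rb.right i = b := by
  have h := Coalgebra.sum_counit_tmul_eq (R := k) rb
  have h2 := congrArg (TensorProduct.lid k H) h
  simp only [map_sum, TensorProduct.lid_tmul, one_smul] at h2
  exact h2

lemma galoisMap_galoisMapInv (x : H ⊗[k] H) :
    galoisMap k H (galoisMapInv k H x) = x := by
  induction x using TensorProduct.induction_on with
  | zero => simp
  | add x y hx hy => rw [map_add, map_add, hx, hy]
  | tmul a b =>
    rw [galoisMapInv_tmul k H a b (ℛ k b), map_sum]
    calc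
      ∑ i ∈ (ℛ k b).index,
          galoisMap k H ((a * HopfAlgebra.antipode (R := k) ((ℛ k b).left i)) ⊗ₜ[k] (ℛ k b).right i)
        = ∑ i ∈ (ℛ k b).index, ∑ j ∈ (ℛ k ((ℛ k b).right i)).index,
            (a * (HopfAlgebra.antipode (R := k) ((ℛ k b).left i) *
              LinearMap.id ((ℛ k ((ℛ k b).right i)).left j))) ⊗ₜ[k]
              (ℛ k ((ℛ k b).right i)).right j := by
          refine Finset.sum_congr rfl fun i _ => ?_
          rw [galoisMap_tmul k H _ _ (ℛ k ((ℛ k b).right i))]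
          simp [mul_assoc]
      _ = ∑ i ∈ (ℛ k b).index, ∑ j ∈ (ℛ k ((ℛ k b).left i)).index,
            (a * (HopfAlgebra.antipode (R := k) ((ℛ k ((ℛ k b).left i)).left j) *
              LinearMap.id ((ℛ k ((ℛ k b).left i)).right j))) ⊗ₜ[k] (ℛ k b).right i :=
          (coassoc_transfer k H LinearMap.id (HopfAlgebra.antipode (R := k)) a b (ℛ k b)
            (fun i => ℛ k ((ℛ k b).left i)) (fun i => ℛ k ((ℛ k b).right i))).symm
      _ = ∑ i ∈ (ℛ k b).index,
            (Coalgebra.counit (R := k) ((ℛ k b).left i)) • (a ⊗ₜ[k] (ℛ k b).right i) := by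
          refine Finset.sum_congr rfl fun i _ => ?_
          rw [← TensorProduct.sum_tmul, ← Finset.mul_sum]
          simp only [LinearMap.id_apply]
          rw [HopfAlgebra.sum_antipode_mul_eq_smul (ℛ k ((ℛ k b).left i))]
          rw [mul_smul_comm, mul_one, TensorProduct.smul_tmul']
      _ = a ⊗ₜ[k] b := by
          simp_rw [← TensorProduct.tmul_smul]
          rw [← TensorProduct.tmul_sum, sum_counit_smul]

lemma galoisMapInv_galoisMap (x : H ⊗[k] H) :
    galoisMapInv k H (galoisMap k H x) = x := by
  induction x using TensorProduct.induction_on with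
  | zero => simp
  | add x y hx hy => rw [map_add, map_add, hx, hy]
  | tmul a b =>
    rw [galoisMap_tmul k H a b (ℛ k b), map_sum]
    calc
      ∑ i ∈ (ℛ k b).index, galoisMapInv k H ((a * (ℛ k b).left i) ⊗ₜ[k] (ℛ k b).right i)
        = ∑ i ∈ (ℛ k b).index, ∑ j ∈ (ℛ k ((ℛ k b).right i)).index,
            (a * (LinearMap.id ((ℛ k b).left i) *
              HopfAlgebra.antipode (R := k) ((ℛ k ((ℛ k b).right i)).left j))) ⊗ₜ[k]
              (ℛ k ((ℛ k b).right i)).right j := by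
          refine Finset.sum_congr rfl fun i _ => ?_
          rw [galoisMapInv_tmul k H _ _ (ℛ k ((ℛ k b).right i))]
          simp [mul_assoc]
      _ = ∑ i ∈ (ℛ k b).index, ∑ j ∈ (ℛ k ((ℛ k b).left i)).index,
            (a * (LinearMap.id ((ℛ k ((ℛ k b).left i)).left j) *
              HopfAlgebra.antipode (R := k) ((ℛ k ((ℛ k b).left i)).right j))) ⊗ₜ[k]
              (ℛ k b).right i :=
          (coassoc_transfer k H (HopfAlgebra.antipode (R := k)) LinearMap.id a b (ℛ k b)
            (fun i => ℛ k ((ℛ k b).left i)) (fun i => ℛ k ((ℛ k b).right i))).symm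
      _ = ∑ i ∈ (ℛ k b).index,
            (Coalgebra.counit (R := k) ((ℛ k b).left i)) • (a ⊗ₜ[k] (ℛ k b).right i) := by
          refine Finset.sum_congr rfl fun i _ => ?_
          rw [← TensorProduct.sum_tmul, ← Finset.mul_sum]
          simp only [LinearMap.id_apply]
          rw [HopfAlgebra.sum_mul_antipode_eq_smul (ℛ k ((ℛ k b).left i))]
          rw [mul_smul_comm, mul_one, TensorProduct.smul_tmul']
      _ = a ⊗ₜ[k] b := by
          simp_rw [← TensorProduct.tmul_smul]
          rw [← TensorProduct.tmul_sum, sum_counit_smul]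

/-- an explicit representation of `comul (b * c)` -/
noncomputable def mulRepr {ι κ : Type*} (b c : H) (rb : Coalgebra.Repr k b ι) (rc : Coalgebra.Repr k c κ) :
    Coalgebra.Repr k (b * c) (ι × κ) where
  index := rb.index ×ˢ rc.index
  left := fun p => rb.left p.1 * rc.left p.2
  right := fun p => rb.right p.1 * rc.right p.2
  eq := by
    rw [Finset.sum_product, Bialgebra.comul_mul, ← rb.eq, ← rc.eq, Finset.sum_mul_sum]
    simp [Algebra.TensorProduct.tmul_mul_tmul]

lemma galoisMapInv_leftmul (c : H) (x : H ⊗[k] H) :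
    galoisMapInv k H ((c ⊗ₜ[k] (1 : H)) * x) = (c ⊗ₜ[k] (1 : H)) * galoisMapInv k H x := by
  induction x using TensorProduct.induction_on with
  | zero => simp
  | add x y hx hy => rw [mul_add, map_add, map_add, mul_add, hx, hy]
  | tmul a b =>
    rw [Algebra.TensorProduct.tmul_mul_tmul, one_mul,
      galoisMapInv_tmul k H _ b (ℛ k b), galoisMapInv_tmul k H a b (ℛ k b), Finset.mul_sum]
    exact Finset.sum_congr rfl fun i _ => by
      rw [Algebra.TensorProduct.tmul_mul_tmul, one_mul, mul_assoc]

lemma galoisMap_rightmul (c : H) (x : H ⊗[k] H) :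
    galoisMap k H (x * ((1 : H) ⊗ₜ[k] c)) = galoisMap k H x * Coalgebra.comul c := by
  induction x using TensorProduct.induction_on with
  | zero => simp
  | add x y hx hy => rw [add_mul, map_add, map_add, add_mul, hx, hy]
  | tmul a b =>
    rw [Algebra.TensorProduct.tmul_mul_tmul, mul_one,
      galoisMap_tmul k H a (b * c) (mulRepr k H b c (ℛ k b) (ℛ k c)),
      galoisMap_tmul k H a b (ℛ k b), ← (ℛ k c).eq, Finset.sum_mul]
    rw [mulRepr]
    rw [Finset.sum_product]
    exact Finset.sum_congr rfl fun i _ => by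
      rw [Finset.mul_sum]
      exact Finset.sum_congr rfl fun j _ => by
        simp [Algebra.TensorProduct.tmul_mul_tmul, mul_assoc]

lemma galoisMapInv_mul_right (y : H ⊗[k] H) (c : H) :
    galoisMapInv k H y * ((1 : H) ⊗ₜ[k] c) = galoisMapInv k H (y * Coalgebra.comul c) := by
  conv_lhs => rw [← galoisMapInv_galoisMap k H (galoisMapInv k H y * ((1 : H) ⊗ₜ[k] c))]
  rw [galoisMap_rightmul, galoisMap_galoisMapInv]

lemma W_mul_mem (R : Submodule k H) (hRideal : ∀ r ∈ R, ∀ h : H, r * h ∈ R)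
    (y : H ⊗[k] H)
    (hy : y ∈ LinearMap.range (TensorProduct.map (LinearMap.id : H →ₗ[k] H) R.subtype))
    (t : H ⊗[k] H) :
    y * t ∈ LinearMap.range (TensorProduct.map (LinearMap.id : H →ₗ[k] H) R.subtype) := by
  obtain ⟨z, rfl⟩ := hy
  induction z using TensorProduct.induction_on with
  | zero => rw [map_zero, zero_mul]; exact zero_mem _
  | add z₁ z₂ h1 h2 => rw [map_add, add_mul]; exact add_mem h1 h2
  | tmul a r =>
    rw [TensorProduct.map_tmul]
    induction t using TensorProduct.induction_on with
    | zero => rw [mul_zero]; exact zero_mem _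
    | add t₁ t₂ h1 h2 => rw [mul_add]; exact add_mem h1 h2
    | tmul u v =>
      exact ⟨(a * u) ⊗ₜ[k] (⟨(r : H) * v, hRideal r r.2 v⟩ : R), by
        simp [Algebra.TensorProduct.tmul_mul_tmul]⟩

lemma W_lmul_mem (R : Submodule k H) (c : H) (y : H ⊗[k] H)
    (hy : y ∈ LinearMap.range (TensorProduct.map (LinearMap.id : H →ₗ[k] H) R.subtype)) :
    (c ⊗ₜ[k] (1 : H)) * y ∈
      LinearMap.range (TensorProduct.map (LinearMap.id : H →ₗ[k] H) R.subtype) := by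
  obtain ⟨z, rfl⟩ := hy
  induction z using TensorProduct.induction_on with
  | zero => rw [map_zero, mul_zero]; exact zero_mem _
  | add z₁ z₂ h1 h2 => rw [map_add, mul_add]; exact add_mem h1 h2
  | tmul a r =>
    exact ⟨(c * a) ⊗ₜ[k] r, by
      simp [Algebra.TensorProduct.tmul_mul_tmul]⟩

end WorAux

open Coalgebra in
/-- Let `H` be a Hopf algebra over a field `k` and
`R ⊆ ker(ε)` a right ideal of `H`.  Then `N := Ψ(H ⊗ R)` (the span of the
elements `a S(r₍₁₎) ⊗ r₍₂₎`) is an `H`-sub-bimodule of `H ⊗ H` for the actions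
`c·x = (c ⊗ 1)·x`, `x·c = x·(1 ⊗ c)`, and `N ⊆ ker(m)`.  Hence every right
ideal `R ⊆ ker(ε)` determines a first-order differential calculus
`ker(m)/N` over `H`. -/
theorem ideal_determines_subbimodule (k H : Type*) [Field k] [Ring H]
    [HopfAlgebra k H] (R : Submodule k H)
    (hR : R ≤ LinearMap.ker (Coalgebra.counit : H →ₗ[k] k))
    (hRideal : ∀ r ∈ R, ∀ h : H, r * h ∈ R) :
    (∀ c : H, ∀ x ∈ idealSubBimodule k H R,
      (c ⊗ₜ[k] (1 : H)) * x ∈ idealSubBimodule k H R) ∧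
    (∀ c : H, ∀ x ∈ idealSubBimodule k H R,
      x * ((1 : H) ⊗ₜ[k] c) ∈ idealSubBimodule k H R) ∧
    idealSubBimodule k H R ≤ LinearMap.ker (LinearMap.mul' k H) := by
  refine ⟨?_, ?_, ?_⟩
  · rintro c x ⟨y, hy, rfl⟩
    rw [← WorAux.galoisMapInv_leftmul]
    exact ⟨_, WorAux.W_lmul_mem k H R c y hy, rfl⟩
  · rintro c x ⟨y, hy, rfl⟩
    rw [WorAux.galoisMapInv_mul_right]
    exact ⟨_, WorAux.W_mul_mem k H R hRideal y hy _, rfl⟩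
  · rintro x ⟨y, ⟨z, rfl⟩, rfl⟩
    rw [LinearMap.mem_ker]
    induction z using TensorProduct.induction_on with
    | zero => simp
    | add z₁ z₂ h1 h2 => rw [map_add, map_add, map_add, h1, h2, add_zero]
    | tmul a r =>
      have hz : Coalgebra.counit (R := k) (r : H) = 0 := hR r.2
      rw [TensorProduct.map_tmul]
      simp only [LinearMap.id_coe, id_eq, Submodule.coe_subtype]
      rw [WorAux.galoisMapInv_tmul k H _ _ (ℛ k (r : H)), map_sum]
      simp_rw [LinearMap.mul'_apply, mul_assoc, ← Finset.mul_sum]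
      rw [HopfAlgebra.sum_antipode_mul_eq_smul (ℛ k (r : H)), hz, zero_smul, mul_zero]
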